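/- arXiv:1005.5569 — 5 statements merged into one kernel-verified Lean document; each statement's English description precedes it below -/
import Mathlib

section
/- Let G and H be finitely generated groups of uniformly exponential growth, let S_G and S_H be finite generating systems of G and H respectively, and let η: (G, d_{S_G}) → (H, d_{S_H}) be an ε-isometry for some ε ≥ 0. Then ω(G, S_G) = ω(H, S_H). -/
/-! Common definitions: word metrics, quasi-isometries, rough isometries. -/

/-- `g` is a product of `n` elements of `S ∪ S⁻¹`. -/
def IsWordProd {G : Type*} [Group G] (S : Set G) (g : G) (n : ℕ) : Prop :=
  ∃ l : List G, l.length = n ∧ (∀ s ∈ l, s ∈ S ∪ S⁻¹) ∧ l.prod = g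

/-- The word metric associated to a generating system `S`: the least `n` such that
`x⁻¹ * y` is a product of `n` elements of `S ∪ S⁻¹`. -/
noncomputable def wdist {G : Type*} [Group G] (S : Set G) (x y : G) : ℕ :=
  sInf {n | IsWordProd S (x⁻¹ * y) n}

/-- The word norm `‖g‖_S = d_S(e, g)`. -/
noncomputable def wnorm {G : Type*} [Group G] (S : Set G) (g : G) : ℕ :=
  wdist S 1 g

/-- `(η, η')` is a `(lam, eps)`-quasi-isometry between `(X, dX)` and `(Y, dY)`. -/
def IsQIPair {X Y : Type*} (dX : X → X → ℝ) (dY : Y → Y → ℝ)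
    (η : X → Y) (η' : Y → X) (lam eps : ℝ) : Prop :=
  (∀ x x' : X, lam⁻¹ * dX x x' - eps ≤ dY (η x) (η x') ∧
      dY (η x) (η x') ≤ lam * dX x x' + eps) ∧
  (∀ y y' : Y, lam⁻¹ * dY y y' - eps ≤ dX (η' y) (η' y') ∧
      dX (η' y) (η' y') ≤ lam * dY y y' + eps) ∧
  (∀ y : Y, dY (η (η' y)) y ≤ eps) ∧
  (∀ x : X, dX (η' (η x)) x ≤ eps)

/-- `(η, η')` is an `eps`-isometry between `(X, dX)` and `(Y, dY)`. -/
def IsEpsIsomPair {X Y : Type*} (dX : X → X → ℝ) (dY : Y → Y → ℝ)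
    (η : X → Y) (η' : Y → X) (eps : ℝ) : Prop :=
  (∀ x x' : X, |dX x x' - dY (η x) (η x')| ≤ eps) ∧
  (∀ y y' : Y, |dY y y' - dX (η' y) (η' y')| ≤ eps) ∧
  (∀ y : Y, dY (η (η' y)) y ≤ eps) ∧
  (∀ x : X, dX (η' (η x)) x ≤ eps)

/-- The real-valued word metric. -/
noncomputable def wdistR {G : Type*} [Group G] (S : Set G) (x y : G) : ℝ :=
  (wdist S x y : ℝ)

/-- The ball of radius `k` around the identity in the word metric of `S`. -/
def wball {G : Type*} [Group G] (S : Set G) (k : ℕ) : Set G :=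
  {g : G | wdist S 1 g ≤ k}

/-- The exponential growth rate `ω(G, S) = limsup_k (#B_{G,S}(k))^(1/k)`. -/
noncomputable def growthRate {G : Type*} [Group G] (S : Set G) : ℝ :=
  Filter.limsup (fun k : ℕ => ((wball S k).ncard : ℝ) ^ ((k : ℝ)⁻¹)) Filter.atTop

/-- `G` has uniformly exponential growth: the infimum of the growth rates over all
finite generating systems is `> 1`. -/
def UniformlyExponentialGrowth (G : Type*) [Group G] : Prop :=
  1 < sInf {r : ℝ | ∃ S : Set G, S.Finite ∧ Subgroup.closure S = ⊤ ∧ r = growthRate S}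

/-!
An `ε`-isometry `f` maps the `k`-ball of `G` into a ball of radius `k + m` in `H` (with `m`
independent of `k`), and each fibre of `f` lies in a translate of the `⌈ε⌉`-ball of `G`. Hence
`#B_G(k) ≤ C · #B_H(k + m)`; after taking `k`-th roots, the constant `C` and the shift `m`
disappear in the limsup, so `ω(G) ≤ ω(H)`. The quasi-inverse gives the reverse inequality.
-/

open Filter Set Topology
open scoped Pointwise

lemma Set.ncard_le_mul_ncard_of_mapsTo {α β : Type*} {f : α → β} {s : Set α} {t : Set β}
    (hs : s.Finite) (ht : t.Finite) (hf : MapsTo f s t) (n : ℕ)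
    (hn : ∀ b ∈ t, (s ∩ f ⁻¹' {b}).ncard ≤ n) : s.ncard ≤ n * t.ncard := by
  classical
  lift s to Finset α using hs
  lift t to Finset β using ht
  simp only [ncard_coe_finset]
  refine Finset.card_le_mul_card_image_of_maps_to hf n fun b hb => ?_
  have hfibre : (({a ∈ s | f a = b} : Finset α) : Set α) = ↑s ∩ f ⁻¹' {b} := by ext; simp
  rw [← ncard_coe_finset, hfibre]
  exact hn b hb

lemma Nat.le_add_ceil_of_abs_sub_le {m n : ℕ} {ε : ℝ} (h : |(m : ℝ) - n| ≤ ε) :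
    m ≤ n + ⌈ε⌉₊ := by
  have hmn := (abs_le.1 h).2
  have hε := Nat.le_ceil ε
  exact_mod_cast (by linarith : (m : ℝ) ≤ n + ⌈ε⌉₊)

lemma Set.list_prod_mem_pow {M : Type*} [Monoid M] {T : Set M} {l : List M}
    (hl : ∀ x ∈ l, x ∈ T) : l.prod ∈ T ^ l.length := by
  induction l with
  | nil => simp
  | cons x l ih =>
    rw [List.prod_cons, List.length_cons, pow_succ']
    exact mul_mem_mul (hl x List.mem_cons_self) (ih fun y hy => hl y (List.mem_cons_of_mem x hy))

section WordMetric

variable {G : Type*} [Group G] {S : Set G}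

lemma wnorm_eq_sInf (g : G) : wnorm S g = sInf {n | IsWordProd S g n} := by
  simp [wnorm, wdist]

lemma wdist_eq_wnorm (x y : G) : wdist S x y = wnorm S (x⁻¹ * y) := by
  simp [wnorm, wdist]

lemma isWordProd_wnorm (hgen : Subgroup.closure S = ⊤) (g : G) :
    IsWordProd S g (wnorm S g) := by
  have hg : g ∈ (Subgroup.closure S).toSubmonoid := by simp [hgen]
  rw [Subgroup.closure_toSubmonoid] at hg
  obtain ⟨l, hl, hprod⟩ := Submonoid.exists_list_of_mem_closure hg
  rw [wnorm_eq_sInf]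
  exact Nat.sInf_mem (⟨l.length, l, rfl, hl, hprod⟩ : ∃ n, IsWordProd S g n)

lemma wnorm_le {g : G} {n : ℕ} (h : IsWordProd S g n) : wnorm S g ≤ n := by
  rw [wnorm_eq_sInf]
  exact Nat.sInf_le h

lemma wnorm_one : wnorm S (1 : G) = 0 :=
  Nat.le_zero.mp (wnorm_le ⟨[], rfl, by simp, rfl⟩)

lemma wdist_self (x : G) : wdist S x x = 0 := by
  rw [wdist_eq_wnorm, inv_mul_cancel, wnorm_one]

lemma wnorm_mul_le (hgen : Subgroup.closure S = ⊤) (g h : G) :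
    wnorm S (g * h) ≤ wnorm S g + wnorm S h := by
  obtain ⟨l₁, hl₁, hmem₁, rfl⟩ := isWordProd_wnorm hgen g
  obtain ⟨l₂, hl₂, hmem₂, rfl⟩ := isWordProd_wnorm hgen h
  refine wnorm_le ⟨l₁ ++ l₂, by simp [hl₁, hl₂], ?_, List.prod_append⟩
  simpa only [List.mem_append, or_imp, forall_and] using ⟨hmem₁, hmem₂⟩

lemma wdist_triangle (hgen : Subgroup.closure S = ⊤) (x y z : G) :
    wdist S x z ≤ wdist S x y + wdist S y z := by
  simp only [wdist_eq_wnorm]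
  simpa only [mul_assoc, mul_inv_cancel_left] using wnorm_mul_le hgen (x⁻¹ * y) (y⁻¹ * z)

lemma inv_mul_mem_wball_iff {x y : G} {k : ℕ} : x⁻¹ * y ∈ wball S k ↔ wdist S x y ≤ k := by
  simp [wball, wdist]

lemma wball_subset_pow (hgen : Subgroup.closure S = ⊤) (k : ℕ) :
    wball S k ⊆ (S ∪ S⁻¹ ∪ {1}) ^ k := by
  intro g hg
  obtain ⟨l, hl, hmem, rfl⟩ := isWordProd_wnorm hgen g
  refine pow_subset_pow_right (by simp) (hl ▸ hg) (list_prod_mem_pow fun x hx => ?_)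
  exact mem_union_left _ (hmem x hx)

lemma finite_wball (hfin : S.Finite) (hgen : Subgroup.closure S = ⊤) (k : ℕ) :
    (wball S k).Finite := by
  classical
  obtain ⟨T, hT⟩ := ((hfin.union hfin.inv).union (finite_singleton (1 : G))).exists_finset_coe
  exact (T ^ k).finite_toSet.subset (by rw [Finset.coe_pow, hT]; exact wball_subset_pow hgen k)

lemma ncard_wball_le (hfin : S.Finite) (hgen : Subgroup.closure S = ⊤) (k : ℕ) :
    (wball S k).ncard ≤ (S ∪ S⁻¹ ∪ {1}).ncard ^ k := by
  classical
  obtain ⟨T, hT⟩ := ((hfin.union hfin.inv).union (finite_singleton (1 : G))).exists_finset_coe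
  have hsub : wball S k ⊆ ↑(T ^ k) := by rw [Finset.coe_pow, hT]; exact wball_subset_pow hgen k
  calc (wball S k).ncard ≤ (T ^ k).card := ncard_coe_finset (T ^ k) ▸ ncard_le_ncard hsub
    _ ≤ T.card ^ k := Finset.card_pow_le
    _ = _ := by rw [← hT, ncard_coe_finset]

end WordMetric

section RoughIsometry

variable {G H : Type*} [Group G] [Group H] {SG : Set G} {SH : Set H} {f : G → H} {e : ℕ}

lemma mapsTo_wball (hSHgen : Subgroup.closure SH = ⊤)
    (hf : ∀ x x', wdist SH (f x) (f x') ≤ wdist SG x x' + e) (k : ℕ) :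
    MapsTo f (wball SG k) (wball SH (k + (wnorm SH (f 1) + e))) := by
  intro x hx
  have hfx := hf 1 x
  have htri := wdist_triangle hSHgen 1 (f 1) (f x)
  change wdist SG 1 x ≤ k at hx
  change wdist SH 1 (f x) ≤ k + (wdist SH 1 (f 1) + e)
  omega

lemma ncard_inter_preimage_singleton_le (hSGfin : SG.Finite) (hSGgen : Subgroup.closure SG = ⊤)
    (hf : ∀ x x', wdist SG x x' ≤ wdist SH (f x) (f x') + e) (s : Set G) (y : H) :
    (s ∩ f ⁻¹' {y}).ncard ≤ (wball SG e).ncard := by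
  rcases (s ∩ f ⁻¹' {y}).eq_empty_or_nonempty with hempty | ⟨x₀, -, hx₀⟩
  · simp [hempty]
  have hfibre : s ∩ f ⁻¹' {y} ⊆ x₀ • wball SG e := by
    rintro x ⟨-, hx⟩
    rw [mem_smul_set_iff_inv_smul_mem, smul_eq_mul, inv_mul_mem_wball_iff]
    have hfx : f x = f x₀ := hx.trans hx₀.symm
    simpa [hfx, wdist_self] using hf x₀ x
  calc (s ∩ f ⁻¹' {y}).ncard ≤ (x₀ • wball SG e).ncard :=
        ncard_le_ncard hfibre ((finite_wball hSGfin hSGgen e).smul_set)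
    _ = (wball SG e).ncard := ncard_smul_set x₀ _

lemma ncard_wball_le_mul_ncard_wball (hSGfin : SG.Finite) (hSGgen : Subgroup.closure SG = ⊤)
    (hSHfin : SH.Finite) (hSHgen : Subgroup.closure SH = ⊤)
    (hle : ∀ x x', wdist SG x x' ≤ wdist SH (f x) (f x') + e)
    (hge : ∀ x x', wdist SH (f x) (f x') ≤ wdist SG x x' + e) (k : ℕ) :
    (wball SG k).ncard ≤ (wball SG e).ncard * (wball SH (k + (wnorm SH (f 1) + e))).ncard :=
  ncard_le_mul_ncard_of_mapsTo (finite_wball hSGfin hSGgen k) (finite_wball hSHfin hSHgen _)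
    (mapsTo_wball hSHgen hge k) _
    fun y _ => ncard_inter_preimage_singleton_le hSGfin hSGgen hle _ y

end RoughIsometry

lemma limsup_rpow_inv_le_of_le_mul_shift {a b : ℕ → ℝ} {C : ℝ} {m : ℕ}
    (ha : ∀ k, 0 ≤ a k) (hb : ∀ k, 0 ≤ b k)
    (hbdd : IsBoundedUnder (· ≤ ·) atTop fun k => b k ^ (k : ℝ)⁻¹)
    (hab : ∀ k, a k ≤ C * b (k + m)) :
    limsup (fun k => a k ^ (k : ℝ)⁻¹) atTop ≤ limsup (fun k => b k ^ (k : ℝ)⁻¹) atTop := by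
  have hL : 0 ≤ limsup (fun k => b k ^ (k : ℝ)⁻¹) atTop :=
    le_limsup_of_frequently_le (Frequently.of_forall fun k => by have := hb k; positivity) hbdd
  refine le_of_forall_gt_imp_ge_of_dense fun c hc => ?_
  have hc₀ : 0 < c := hL.trans_lt hc
  have hbc : ∀ᶠ n in atTop, b n ≤ c ^ n := by
    filter_upwards [eventually_lt_of_limsup_lt hc hbdd, eventually_ne_atTop 0] with n hn hn₀
    have hn' := (Real.rpow_inv_lt_iff_of_pos (hb n) hc₀.le (by positivity)).mp hn
    exact_mod_cast hn'.le
  set D := max C 1 * c ^ m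
  have hac : ∀ᶠ k in atTop, a k ≤ D * c ^ k := by
    filter_upwards [(tendsto_add_atTop_nat m).eventually hbc] with k hk
    calc a k ≤ C * b (k + m) := hab k
      _ ≤ max C 1 * c ^ (k + m) :=
          mul_le_mul (le_max_left C 1) hk (hb _) (zero_le_one.trans (le_max_right C 1))
      _ = D * c ^ k := by rw [pow_add]; ring
  have hroot : Tendsto (fun k : ℕ => D ^ (k : ℝ)⁻¹ * c) atTop (𝓝 c) := by
    have hD : D ≠ 0 := by positivity
    simpa using ((Real.continuousAt_const_rpow hD).tendsto.comp
      tendsto_inv_atTop_nhds_zero_nat).mul_const c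
  calc limsup (fun k => a k ^ (k : ℝ)⁻¹) atTop ≤ limsup (fun k : ℕ => D ^ (k : ℝ)⁻¹ * c) atTop := by
        refine limsup_le_limsup ?_ (isCoboundedUnder_le_of_le atTop fun k => by
          have := ha k; positivity) hroot.isBoundedUnder_le
        filter_upwards [hac, eventually_ne_atTop 0] with k hk hk₀
        calc a k ^ (k : ℝ)⁻¹ ≤ (D * c ^ k) ^ (k : ℝ)⁻¹ :=
              Real.rpow_le_rpow (ha k) hk (by positivity)
          _ = D ^ (k : ℝ)⁻¹ * c := by
              rw [Real.mul_rpow (by positivity) (by positivity),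
                Real.pow_rpow_inv_natCast hc₀.le hk₀]
    _ = c := hroot.limsup_eq

lemma isBoundedUnder_ncard_wball_rpow_inv {G : Type*} [Group G] {S : Set G} (hfin : S.Finite)
    (hgen : Subgroup.closure S = ⊤) :
    IsBoundedUnder (· ≤ ·) atTop fun k : ℕ => ((wball S k).ncard : ℝ) ^ (k : ℝ)⁻¹ := by
  refine isBoundedUnder_of_eventually_le (a := ((S ∪ S⁻¹ ∪ {1}).ncard : ℝ)) ?_
  filter_upwards [eventually_ne_atTop 0] with k hk
  rw [Real.rpow_inv_le_iff_of_pos (by positivity) (by positivity) (by positivity),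
    Real.rpow_natCast]
  exact_mod_cast ncard_wball_le hfin hgen k

lemma growthRate_le_of_abs_wdistR_sub_le {G H : Type*} [Group G] [Group H] {SG : Set G}
    {SH : Set H} (hSGfin : SG.Finite) (hSGgen : Subgroup.closure SG = ⊤) (hSHfin : SH.Finite)
    (hSHgen : Subgroup.closure SH = ⊤) {f : G → H} {ε : ℝ}
    (hf : ∀ x x', |wdistR SG x x' - wdistR SH (f x) (f x')| ≤ ε) :
    growthRate SG ≤ growthRate SH := by
  have hle : ∀ x x', wdist SG x x' ≤ wdist SH (f x) (f x') + ⌈ε⌉₊ := fun x x' =>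
    Nat.le_add_ceil_of_abs_sub_le (hf x x')
  have hge : ∀ x x', wdist SH (f x) (f x') ≤ wdist SG x x' + ⌈ε⌉₊ := fun x x' =>
    Nat.le_add_ceil_of_abs_sub_le (abs_sub_comm (wdistR SG x x') _ ▸ hf x x')
  refine limsup_rpow_inv_le_of_le_mul_shift (C := (wball SG ⌈ε⌉₊).ncard)
    (m := wnorm SH (f 1) + ⌈ε⌉₊) (fun _ => Nat.cast_nonneg _) (fun _ => Nat.cast_nonneg _)
    (isBoundedUnder_ncard_wball_rpow_inv hSHfin hSHgen) fun k => ?_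
  exact_mod_cast ncard_wball_le_mul_ncard_wball hSGfin hSGgen hSHfin hSHgen hle hge k

theorem growth_rate_rough_isometry_invariant_general
    {G H : Type*} [Group G] [Group H]
    (SG : Set G) (hSGfin : SG.Finite) (hSGgen : Subgroup.closure SG = ⊤)
    (SH : Set H) (hSHfin : SH.Finite) (hSHgen : Subgroup.closure SH = ⊤)
    (η : G → H) (η' : H → G) (eps : ℝ)
    (hqi : IsEpsIsomPair (wdistR SG) (wdistR SH) η η' eps) :
    growthRate SG = growthRate SH :=
  le_antisymm (growthRate_le_of_abs_wdistR_sub_le hSGfin hSGgen hSHfin hSHgen hqi.1)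
    (growthRate_le_of_abs_wdistR_sub_le hSHfin hSHgen hSGfin hSGgen hqi.2.1)

/-- An `eps`-isometry between two finitely generated groups of uniformly
exponential growth (with fixed finite generating systems) preserves the exponential
growth rate. -/
theorem growth_rate_rough_isometry_invariant
    {G H : Type*} [Group G] [Group H]
    (hG : UniformlyExponentialGrowth G) (hH : UniformlyExponentialGrowth H)
    (SG : Set G) (hSGfin : SG.Finite) (hSGgen : Subgroup.closure SG = ⊤)
    (SH : Set H) (hSHfin : SH.Finite) (hSHgen : Subgroup.closure SH = ⊤)
    (η : G → H) (η' : H → G) (eps : ℝ) (heps : 0 ≤ eps)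
    (hqi : IsEpsIsomPair (wdistR SG) (wdistR SH) η η' eps) :
    growthRate SG = growthRate SH :=
  growth_rate_rough_isometry_invariant_general SG hSGfin hSGgen SH hSHfin hSHgen η η' eps hqi
end

section
/- Let G be a finitely generated group and let 𝒮_asym be the family of all finite subsets S of G that generate G as a monoid, with asymmetric word distance d_S(x,y) := the least n such that x⁻¹y is a product of n elements of S. Then a bijection φ: G → G satisfies d_S(φx, φy) = d_S(x,y) for all x, y ∈ G and all S ∈ 𝒮_asym if and only if φ is a left translation x ↦ c·x for some c ∈ G. Consequently the group of such shared isometries (under composition) is isomorphic to G. -/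
/-- The asymmetric word distance: the least `n` such that `x⁻¹ * y` is a product of `n`
elements of `S` (inverses are not allowed). -/
noncomputable def awdist {G : Type*} [Group G] (S : Set G) (x y : G) : ℕ :=
  sInf {n | ∃ l : List G, l.length = n ∧ (∀ s ∈ l, s ∈ S) ∧ l.prod = x⁻¹ * y}

/-- The group (under composition) of bijections of `G` preserving the distance `d S`
for every generating system `S` in the family `𝒮`, as a subgroup of `Equiv.Perm G`. -/
def sharedIsomGroup {G : Type*} [Group G] (𝒮 : Set (Set G))
    (d : Set G → G → G → ℕ) : Subgroup (Equiv.Perm G) where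
  carrier := {φ : Equiv.Perm G | ∀ S ∈ 𝒮, ∀ x y : G, d S (φ x) (φ y) = d S x y}
  one_mem' := fun S _ x y => rfl
  mul_mem' := by
    intro a b ha hb S hS x y
    rw [Equiv.Perm.mul_apply, Equiv.Perm.mul_apply, ha S hS, hb S hS]
  inv_mem' := by
    intro a ha S hS x y
    have h := ha S hS (a⁻¹ x) (a⁻¹ y)
    rw [← Equiv.Perm.mul_apply, ← Equiv.Perm.mul_apply, mul_inv_cancel, Equiv.Perm.one_apply,
      Equiv.Perm.one_apply] at h
    exact h.symm

/-- The family of all finite subsets of `G` generating `G` as a monoid. -/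
def asymGenFamily (G : Type*) [Group G] : Set (Set G) :=
  {S : Set G | S.Finite ∧ Submonoid.closure S = ⊤}

/-! A distance-preserving `φ` satisfies `d_S(1, φ(1)⁻¹ φ(g)) = d_S(1, g)` for every `S`, and
`d_S(1, x) = 1` exactly when `x` is a nontrivial element of `S`. For `g ≠ 1` and `a ≠ g`, the set
`(T \ {a}) ∪ {g, g⁻¹ a}` built from any finite monoid generating set `T` still generates
(as `a = g · g⁻¹ a`), contains `g` but not `a`; so `φ(1)⁻¹ φ(g) = g` for every `g`. -/

section

variable {G : Type*} [Group G]

lemma awdist_mul_left (S : Set G) (c x y : G) : awdist S (c * x) (c * y) = awdist S x y := by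
  simp only [awdist, mul_inv_rev, mul_assoc, inv_mul_cancel_left]

lemma awdist_eq_awdist_one (S : Set G) (x y : G) : awdist S x y = awdist S 1 (x⁻¹ * y) := by
  simp only [awdist, inv_one, one_mul]

lemma awdist_one_eq_one_iff {S : Set G} {x : G} : awdist S 1 x = 1 ↔ x ≠ 1 ∧ x ∈ S := by
  simp only [awdist, inv_one, one_mul]
  set A := {n | ∃ l : List G, l.length = n ∧ (∀ s ∈ l, s ∈ S) ∧ l.prod = x}
  have zero_mem_iff : 0 ∈ A ↔ x = 1 := by
    simp only [A, Set.mem_ofPred_eq, List.length_eq_zero_iff, exists_eq_left, List.prod_nil]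
    simp [eq_comm]
  have one_mem_iff : 1 ∈ A ↔ x ∈ S := by
    simp only [A, Set.mem_ofPred_eq, List.length_eq_one_iff]
    constructor
    · rintro ⟨_, ⟨s, rfl⟩, hs, rfl⟩
      simpa using hs
    · exact fun hx => ⟨[x], ⟨x, rfl⟩, by simpa using hx, by simp⟩
  constructor
  · intro h
    have hA : A.Nonempty := Set.nonempty_iff_ne_empty.mpr fun hA => by simp [hA] at h
    have hx : x ≠ 1 := fun hx => by
      simp [Nat.sInf_eq_zero.mpr (Or.inl (zero_mem_iff.mpr hx))] at h
    exact ⟨hx, one_mem_iff.mp (h ▸ Nat.sInf_mem hA)⟩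
  · rintro ⟨hx, hxS⟩
    refine le_antisymm (Nat.sInf_le (one_mem_iff.mpr hxS)) (Nat.one_le_iff_ne_zero.mpr ?_)
    rw [Ne, Nat.sInf_eq_zero, zero_mem_iff, ← Set.not_nonempty_iff_eq_empty]
    exact not_or_intro hx (not_not_intro ⟨1, one_mem_iff.mpr hxS⟩)

lemma exists_mem_asymGenFamily_mem_not_mem {T : Set G} (hT : T ∈ asymGenFamily G) {g a : G}
    (hg : g ≠ 1) (hga : g ≠ a) : ∃ S ∈ asymGenFamily G, g ∈ S ∧ a ∉ S := by
  set S := insert g (insert (g⁻¹ * a) (T \ {a}))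
  have hgS : g ∈ S := Set.mem_insert _ _
  have hgaS : g⁻¹ * a ∈ S := Set.mem_insert_of_mem _ (Set.mem_insert _ _)
  have hTS : T \ {a} ⊆ S := (Set.subset_insert _ _).trans (Set.subset_insert _ _)
  refine ⟨S, ⟨(hT.1.sdiff.insert _).insert _, ?_⟩, hgS, ?_⟩
  · rw [eq_top_iff, ← hT.2, Submonoid.closure_le]
    intro t ht
    by_cases hta : t = a
    · have := mul_mem (Submonoid.subset_closure hgS) (Submonoid.subset_closure hgaS)
      rwa [mul_inv_cancel_left, ← hta] at this
    · exact Submonoid.subset_closure (hTS ⟨ht, hta⟩)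
  · simp only [S, Set.mem_insert_iff, Set.mem_sdiff, Set.mem_singleton_iff, not_true_eq_false,
      and_false, or_false, not_or]
    exact ⟨Ne.symm hga, fun h => hg (by simpa using congrArg (· * a⁻¹) h.symm)⟩

lemma eq_of_forall_awdist_one_eq {T : Set G} (hT : T ∈ asymGenFamily G) {a g : G}
    (h : ∀ S ∈ asymGenFamily G, awdist S 1 a = awdist S 1 g) : a = g := by
  by_contra hag
  wlog hg : g ≠ 1 generalizing a g
  · exact this (fun S hS => (h S hS).symm) (Ne.symm hag) (by rwa [← not_not.mp hg])
  obtain ⟨S, hS, hgS, haS⟩ := exists_mem_asymGenFamily_mem_not_mem hT hg (Ne.symm hag)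
  have hg1 : awdist S 1 g = 1 := awdist_one_eq_one_iff.mpr ⟨hg, hgS⟩
  exact haS (awdist_one_eq_one_iff.mp ((h S hS).trans hg1)).2

lemma eq_mul_of_forall_awdist_eq {T : Set G} (hT : T ∈ asymGenFamily G) {φ : G → G}
    (h : ∀ S ∈ asymGenFamily G, ∀ x y : G, awdist S (φ x) (φ y) = awdist S x y) (x : G) :
    φ x = φ 1 * x := by
  have hx : (φ 1)⁻¹ * φ x = x := eq_of_forall_awdist_one_eq hT fun S hS => by
    rw [← awdist_eq_awdist_one, h S hS]
  calc φ x = φ 1 * ((φ 1)⁻¹ * φ x) := (mul_inv_cancel_left _ _).symm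
    _ = φ 1 * x := by rw [hx]

lemma asymGenFamily_nonempty [Group.FG G] : (asymGenFamily G).Nonempty :=
  let ⟨T, hT⟩ := (Group.fg_iff_monoid_fg.mp ‹Group.FG G›).fg_top
  ⟨T, T.finite_toSet, hT⟩

lemma sharedIsomGroup_asymGenFamily_eq_range [Group.FG G] :
    sharedIsomGroup (asymGenFamily G) awdist = (MulAction.toPermHom G G).range := by
  obtain ⟨T, hT⟩ := asymGenFamily_nonempty (G := G)
  ext φ
  constructor
  · intro hφ
    exact ⟨φ 1, Equiv.ext fun x => (eq_mul_of_forall_awdist_eq hT hφ x).symm⟩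
  · rintro ⟨c, rfl⟩ S _ x y
    exact awdist_mul_left S c x y

end

/-- A bijection of a finitely generated group `G` preserving the
asymmetric word distance of every finite monoid generating system is exactly a left
translation; consequently the group of these shared isometries is isomorphic to `G`. -/
theorem shared_isometries_asymmetric {G : Type*} [Group G] [Group.FG G] :
    (∀ φ : G → G, Function.Bijective φ →
      ((∀ S : Set G, S.Finite → Submonoid.closure S = ⊤ →
          ∀ x y : G, awdist S (φ x) (φ y) = awdist S x y) ↔
        ∃ c : G, ∀ x : G, φ x = c * x)) ∧
    Nonempty (G ≃* sharedIsomGroup (asymGenFamily G) awdist) := by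
  obtain ⟨T, hT⟩ := asymGenFamily_nonempty (G := G)
  refine ⟨fun φ _ => ⟨fun h => ⟨φ 1, ?_⟩, ?_⟩, ⟨?_⟩⟩
  · exact eq_mul_of_forall_awdist_eq hT fun S hS => h S hS.1 hS.2
  · rintro ⟨c, hc⟩ S - - x y
    rw [hc, hc, awdist_mul_left]
  · exact (MonoidHom.ofInjective MulAction.toPerm_injective).trans
      (MulEquiv.subgroupCongr sharedIsomGroup_asymGenFamily_eq_range.symm)
end

section
/- Let G be a finitely generated group possessing a finite symmetric generating system S_0 that is minimal (no proper subset of S_0 generates G) and such that every s ∈ S_0 has order 2 (s² = e). Then every bijection φ: G → G that is an isometry of (G, d_S) for every finite symmetric generating system S of G is a left translation x ↦ c·x for some c ∈ G; consequently the group of all such shared isometries is isomorphic to G. -/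
/-- The family of all finite symmetric generating systems of `G`. -/
def symGenFamily (G : Type*) [Group G] : Set (Set G) :=
  {S : Set G | S.Finite ∧ S⁻¹ = S ∧ Subgroup.closure S = ⊤}

/-!
A shared isometry `ψ` with `ψ 1 = 1` maps each `u ∈ S₀` to some `t ∈ S₀`, since `u` is at distance
one from `1` for `S₀`. If `t ≠ u`, the finite symmetric generating system `(S₀ \ {u}) ∪ {u t, t u}`
puts `t`, but not `u`, at distance one from `1`; so `ψ` fixes `S₀` pointwise. Applied to the
shared isometries `x ↦ ψ(a)⁻¹ ψ(a x)`, this gives `ψ(a s) = ψ(a) s` for all `s ∈ S₀`, hence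
`ψ x = ψ(1) x` for all `x`.
-/

section WordMetric

variable {G : Type*} [Group G] {S : Set G} {g x y : G}

lemma isWordProd_zero_iff : IsWordProd S g 0 ↔ g = 1 := by
  constructor
  · rintro ⟨l, hl, -, rfl⟩
    simp [List.length_eq_zero_iff.1 hl]
  · rintro rfl
    exact ⟨[], rfl, by simp, rfl⟩

lemma isWordProd_one_iff : IsWordProd S g 1 ↔ g ∈ S ∪ S⁻¹ := by
  constructor
  · rintro ⟨l, hl, hmem, rfl⟩
    obtain ⟨a, rfl⟩ := List.length_eq_one_iff.1 hl
    simpa using hmem a (by simp)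
  · intro hg
    exact ⟨[g], rfl, by simpa using hg, by simp⟩

lemma exists_isWordProd (hS : Subgroup.closure S = ⊤) (g : G) : ∃ n, IsWordProd S g n := by
  have hg : g ∈ (Subgroup.closure S).toSubmonoid := by simp [hS]
  rw [Subgroup.closure_toSubmonoid] at hg
  obtain ⟨l, hmem, hprod⟩ := Submonoid.exists_list_of_mem_closure hg
  exact ⟨l.length, l, rfl, hmem, hprod⟩

lemma wdist_eq_zero_iff (hS : Subgroup.closure S = ⊤) : wdist S x y = 0 ↔ x = y := by
  have hne : {n | IsWordProd S (x⁻¹ * y) n}.Nonempty := exists_isWordProd hS _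
  rw [wdist, Nat.sInf_eq_zero, or_iff_left hne.ne_empty, Set.mem_ofPred_eq, isWordProd_zero_iff,
    inv_mul_eq_one]

lemma wdist_eq_one_iff (hS : Subgroup.closure S = ⊤) :
    wdist S x y = 1 ↔ x ≠ y ∧ x⁻¹ * y ∈ S ∪ S⁻¹ := by
  rw [Ne, ← wdist_eq_zero_iff hS, ← isWordProd_one_iff]
  constructor
  · intro h
    exact ⟨by omega, h ▸ Nat.sInf_mem (exists_isWordProd hS _)⟩
  · rintro ⟨h0, h1⟩
    have : wdist S x y ≤ 1 := Nat.sInf_le h1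
    omega

lemma wdist_mul_left (S : Set G) (g x y : G) : wdist S (g * x) (g * y) = wdist S x y := by
  simp only [wdist, mul_inv_rev, mul_assoc, inv_mul_cancel_left]

end WordMetric

lemma apply_eq_apply_one_mul_of_map_mul_mem {G : Type*} [Group G] {S : Set G} {f : G → G}
    (hS : Subgroup.closure S = ⊤) (hf : ∀ a, ∀ s ∈ S, f (a * s) = f a * s) (x : G) :
    f x = f 1 * x := by
  have hx : x ∈ Subgroup.closure S := hS ▸ Subgroup.mem_top x
  induction hx using Subgroup.closure_induction_right with
  | one => rw [mul_one]
  | mul_right y _ s hs ih => rw [hf y s hs, ih, mul_assoc]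
  | mul_inv_cancel y _ s hs ih =>
    have h := hf (y * s⁻¹) s hs
    rw [inv_mul_cancel_right, ih] at h
    rw [← mul_assoc, eq_mul_inv_iff_mul_eq, ← h]

section SharedIsometry

variable {G : Type*} [Group G] {S S₀ : Set G} {ψ : G → G}

def PreservesWordMetrics (ψ : G → G) : Prop :=
  ∀ S ∈ symGenFamily G, ∀ x y, wdist S (ψ x) (ψ y) = wdist S x y

lemma preservesWordMetrics_mulLeft (c : G) : PreservesWordMetrics (c * ·) :=
  fun S _ => wdist_mul_left S c

lemma exists_mem_symGenFamily_mem_not_mem (hS₀ : S₀ ∈ symGenFamily G) {t u : G} (ht : t ∈ S₀)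
    (htu : t ≠ u) (ht1 : t ≠ 1) (ht2 : t * t = 1) (hu2 : u * u = 1) :
    ∃ S ∈ symGenFamily G, t ∈ S ∧ u ∉ S := by
  obtain ⟨hfin, hsym, hgen⟩ := hS₀
  have htinv : t⁻¹ = t := inv_eq_of_mul_eq_one_left ht2
  have huinv : u⁻¹ = u := inv_eq_of_mul_eq_one_left hu2
  refine ⟨insert (u * t) (insert (t * u) (S₀ \ {u})), ⟨?_, ?_, ?_⟩, ?_, ?_⟩
  · exact (hfin.sdiff.insert _).insert _
  · have hdiff : (S₀ \ {u})⁻¹ = S₀⁻¹ \ {u}⁻¹ := Set.preimage_sdiff ..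
    rw [Set.inv_insert, Set.inv_insert, hdiff, hsym, Set.inv_singleton, mul_inv_rev,
      mul_inv_rev, htinv, huinv, Set.insert_comm]
  · rw [eq_top_iff, ← hgen, Subgroup.closure_le]
    intro s hs
    by_cases hsu : s = u
    · have hut : u * t * t⁻¹ = u := mul_inv_cancel_right u t
      rw [hsu, ← hut]
      exact mul_mem (Subgroup.subset_closure (by simp))
        (inv_mem (Subgroup.subset_closure (by simp [ht, htu])))
    · exact Subgroup.subset_closure (by simp [hs, hsu])
  · simp [ht, htu]
  · simp [ht1]

namespace PreservesWordMetrics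

lemma mulLeft_comp (hψ : PreservesWordMetrics ψ) (c : G) :
    PreservesWordMetrics fun x => c * ψ x := fun S hS x y => by
  rw [wdist_mul_left, hψ S hS]

lemma comp_mulLeft (hψ : PreservesWordMetrics ψ) (a : G) :
    PreservesWordMetrics fun x => ψ (a * x) := fun S hS x y => by
  rw [hψ S hS, wdist_mul_left]

lemma injective (hψ : PreservesWordMetrics ψ) (hS : S ∈ symGenFamily G) : ψ.Injective :=
  fun x y h => (wdist_eq_zero_iff hS.2.2).1 <| by
    rw [← hψ S hS, h, wdist_eq_zero_iff hS.2.2]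

lemma inv_mul_mem_iff (hψ : PreservesWordMetrics ψ) (hS : S ∈ symGenFamily G) {a b : G}
    (hab : a ≠ b) : (ψ a)⁻¹ * ψ b ∈ S ↔ a⁻¹ * b ∈ S := by
  have hne : ψ a ≠ ψ b := (hψ.injective hS).ne hab
  have hsymm : S ∪ S⁻¹ = S := by rw [hS.2.1, Set.union_self]
  have h := wdist_eq_one_iff (x := a) (y := b) hS.2.2
  rw [← hψ S hS, wdist_eq_one_iff hS.2.2] at h
  simpa only [hsymm, ne_eq, hab, hne, not_false_eq_true, true_and] using h

lemma apply_eq_self_of_mem (hψ : PreservesWordMetrics ψ) (hψ1 : ψ 1 = 1)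
    (hS₀ : S₀ ∈ symGenFamily G) (hord : ∀ s ∈ S₀, s * s = 1) {u : G} (hu : u ∈ S₀) :
    ψ u = u := by
  by_cases hu1 : u = 1
  · rw [hu1, hψ1]
  by_contra htu
  have htS₀ : ψ u ∈ S₀ := by
    simpa [hψ1] using (hψ.inv_mul_mem_iff hS₀ (Ne.symm hu1)).2 (by simpa using hu)
  have ht1 : ψ u ≠ 1 := hψ1 ▸ (hψ.injective hS₀).ne hu1
  obtain ⟨S, hS, htS, huS⟩ := exists_mem_symGenFamily_mem_not_mem hS₀ htS₀ htu ht1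
    (hord _ htS₀) (hord u hu)
  have huS' := (hψ.inv_mul_mem_iff hS (Ne.symm hu1)).1 (by simpa [hψ1] using htS)
  exact huS (by simpa using huS')

lemma map_mul_of_mem (hψ : PreservesWordMetrics ψ) (hS₀ : S₀ ∈ symGenFamily G)
    (hord : ∀ s ∈ S₀, s * s = 1) (a : G) {s : G} (hs : s ∈ S₀) : ψ (a * s) = ψ a * s := by
  have h := ((hψ.comp_mulLeft a).mulLeft_comp (ψ a)⁻¹).apply_eq_self_of_mem (by simp) hS₀ hord hs
  rwa [inv_mul_eq_iff_eq_mul] at h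

theorem exists_eq_mul_left (hψ : PreservesWordMetrics ψ) (hS₀ : S₀ ∈ symGenFamily G)
    (hord : ∀ s ∈ S₀, s * s = 1) : ∃ c, ∀ x, ψ x = c * x :=
  ⟨ψ 1, apply_eq_apply_one_mul_of_map_mul_mem hS₀.2.2 fun a _ hs =>
    hψ.map_mul_of_mem hS₀ hord a hs⟩

end PreservesWordMetrics

theorem nonempty_mulEquiv_sharedIsomGroup
    (h : ∀ φ : G → G, PreservesWordMetrics φ → ∃ c, ∀ x, φ x = c * x) :
    Nonempty (G ≃* sharedIsomGroup (symGenFamily G) wdist) := by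
  let f : G →* sharedIsomGroup (symGenFamily G) wdist :=
    (MulAction.toPermHom G G).codRestrict _ preservesWordMetrics_mulLeft
  refine ⟨MulEquiv.ofBijective f ⟨fun c d hcd => ?_, fun φ => ?_⟩⟩
  · simpa [f, MonoidHom.codRestrict] using
      congrArg (fun φ : sharedIsomGroup (symGenFamily G) wdist => φ.1 1) hcd
  · obtain ⟨c, hc⟩ := h φ φ.2
    exact ⟨c, Subtype.ext (Equiv.ext fun x => (hc x).symm)⟩

end SharedIsometry

theorem shared_isometries_order_two_general {G : Type*} [Group G]
    (S₀ : Set G) (hfin : S₀.Finite) (hsym : S₀⁻¹ = S₀)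
    (hgen : Subgroup.closure S₀ = ⊤)
    (hord : ∀ s ∈ S₀, s * s = 1) :
    (∀ φ : G → G, Function.Bijective φ →
      (∀ S : Set G, S.Finite → S⁻¹ = S → Subgroup.closure S = ⊤ →
        ∀ x y : G, wdist S (φ x) (φ y) = wdist S x y) →
      ∃ c : G, ∀ x : G, φ x = c * x) ∧
    Nonempty (G ≃* sharedIsomGroup (symGenFamily G) wdist) := by
  have hS₀ : S₀ ∈ symGenFamily G := ⟨hfin, hsym, hgen⟩
  have htranslation : ∀ φ : G → G, PreservesWordMetrics φ → ∃ c, ∀ x, φ x = c * x :=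
    fun φ hφ => hφ.exists_eq_mul_left hS₀ hord
  exact ⟨fun φ _ hφ => htranslation φ fun S hS => hφ S hS.1 hS.2.1 hS.2.2,
    nonempty_mulEquiv_sharedIsomGroup htranslation⟩

/-- If `G` has a minimal finite symmetric generating system all of
whose elements have order 2, then every shared isometry for the family of all finite
symmetric generating systems is a left translation, and the group of shared isometries
is isomorphic to `G`. -/
theorem shared_isometries_order_two {G : Type*} [Group G] [Group.FG G]
    (S₀ : Set G) (hfin : S₀.Finite) (hsym : S₀⁻¹ = S₀)
    (hgen : Subgroup.closure S₀ = ⊤)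
    (hmin : ∀ T : Set G, T ⊂ S₀ → Subgroup.closure T ≠ ⊤)
    (hord : ∀ s ∈ S₀, s * s = 1) :
    (∀ φ : G → G, Function.Bijective φ →
      (∀ S : Set G, S.Finite → S⁻¹ = S → Subgroup.closure S = ⊤ →
        ∀ x y : G, wdist S (φ x) (φ y) = wdist S x y) →
      ∃ c : G, ∀ x : G, φ x = c * x) ∧
    Nonempty (G ≃* sharedIsomGroup (symGenFamily G) wdist) :=
  shared_isometries_order_two_general S₀ hfin hsym hgen hord
end

section
/- Let G be a finitely generated group admitting a family 𝒮 of finite symmetric generating systems with Property (★). Then every element of G of finite order has order 1, 2, 3, 4, or 6 (equivalently, every torsion element x satisfies: the order n of x has Euler totient φ(n) ≤ 2). -/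
/-- Property (★): for all `g ≠ h`, `g ≠ h⁻¹` and every positive `R` there is `S ∈ 𝒮`
containing one of `g`, `h` while the other has word norm at least `R`. -/
def PropertyStar {G : Type*} [Group G] (𝒮 : Set (Set G)) : Prop :=
  ∀ g h : G, g ≠ h → g ≠ h⁻¹ → ∀ R : ℕ, 0 < R →
    ∃ S ∈ 𝒮, (g ∈ S ∧ R ≤ wnorm S h) ∨ (h ∈ S ∧ R ≤ wnorm S g)

/-- `φ` is an `𝒮`-uniform quasi-isometry of `G`: for some fixed `λ, ε ≥ 0` and some
`φ'`, the pair `(φ, φ')` is a `(λ, ε)`-quasi-isometry of `(G, d_S)` for every `S ∈ 𝒮`. -/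
def UniformQI {G : Type*} [Group G] (𝒮 : Set (Set G)) (φ : G → G) : Prop :=
  ∃ lam eps : ℝ, 0 ≤ lam ∧ 0 ≤ eps ∧ ∃ φ' : G → G,
    ∀ S ∈ 𝒮, IsQIPair (wdistR S) (wdistR S) φ φ' lam eps

/-! If `x` has order `n` and `φ n > 2`, some exponent `a` coprime to `n` is neither `1` nor `-1`
modulo `n`. Then `g = x ^ a` and `x` are powers of each other with exponents below `n`, while
`g ≠ x` and `g ≠ x⁻¹`; but Property (★) with `R = n` puts one of them into some `S ∈ 𝒮` and
gives the other one word length at least `n`. The list `1, 2, 3, 4, 6` is then elementary: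
`5 ∤ n` since `φ 5 = 4`, so `n ∣ 5 ^ φ n - 1`, which divides `24`. -/

lemma wnorm_pow_le {G : Type*} [Group G] {S : Set G} {s : G} (hs : s ∈ S) (k : ℕ) :
    wnorm S (s ^ k) ≤ k :=
  Nat.sInf_le ⟨List.replicate k s, List.length_replicate,
    fun _ ht ↦ List.eq_of_mem_replicate ht ▸ Or.inl hs, by simp⟩

lemma PropertyStar.eq_or_eq_inv_of_pow_eq {G : Type*} [Group G] {𝒮 : Set (Set G)}
    (hstar : PropertyStar 𝒮) {g x : G} {a b : ℕ} (hg : x ^ a = g) (hx : g ^ b = x) :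
    g = x ∨ g = x⁻¹ := by
  by_contra! hne
  obtain ⟨S, -, ⟨hgS, hlt⟩ | ⟨hxS, hlt⟩⟩ := hstar g x hne.1 hne.2 (a + b + 1) (by omega)
  · have := hx ▸ wnorm_pow_le hgS b
    omega
  · have := hg ▸ wnorm_pow_le hxS a
    omega

lemma Nat.exists_coprime_ne_one_ne_sub_one {n : ℕ} (h : 2 < n.totient) :
    ∃ a < n, a.Coprime n ∧ a ≠ 1 ∧ a ≠ n - 1 := by
  have hcard : ({1, n - 1} : Finset ℕ).card < n.totient := Finset.card_le_two.trans_lt h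
  obtain ⟨a, ha, hne⟩ := Finset.exists_mem_notMem_of_card_lt_card hcard
  rw [Finset.mem_filter, Finset.mem_range] at ha
  simp only [Finset.mem_insert, Finset.mem_singleton, not_or] at hne
  exact ⟨a, ha.1, ha.2.symm, hne⟩

lemma Nat.dvd_twenty_four_of_totient_le_two {n : ℕ} (hn : 0 < n) (h : n.totient ≤ 2) :
    n ∣ 24 := by
  have hφ : 0 < n.totient := Nat.totient_pos.2 hn
  have hcop : Nat.Coprime 5 n := (Nat.Prime.coprime_iff_not_dvd (by norm_num)).2 fun h5 ↦ by
    have := Nat.le_of_dvd hφ (Nat.totient_dvd_of_dvd h5)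
    simp [Nat.totient_prime (by norm_num : Nat.Prime 5)] at this
    omega
  have hpow : n ∣ 5 ^ n.totient - 1 :=
    (Nat.modEq_iff_dvd' (Nat.one_le_pow _ _ (by norm_num))).1 (Nat.ModEq.pow_totient hcop).symm
  refine hpow.trans ?_
  interval_cases n.totient <;> norm_num

lemma Nat.mem_of_totient_le_two {n : ℕ} (hn : 0 < n) (h : n.totient ≤ 2) :
    n ∈ ({1, 2, 3, 4, 6} : Set ℕ) := by
  have hdiv : n ∈ Nat.divisors 24 :=
    Nat.mem_divisors.2 ⟨Nat.dvd_twenty_four_of_totient_le_two hn h, by norm_num⟩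
  have key : ∀ m ∈ Nat.divisors 24, m.totient ≤ 2 → m ∈ ({1, 2, 3, 4, 6} : Finset ℕ) := by
    decide
  simpa using key n hdiv h

lemma PropertyStar.totient_orderOf_le_two {G : Type*} [Group G] {𝒮 : Set (Set G)}
    (hstar : PropertyStar 𝒮) (x : G) : (orderOf x).totient ≤ 2 := by
  by_contra! h
  obtain ⟨a, han, hcop, ha1, ha2⟩ := Nat.exists_coprime_ne_one_ne_sub_one h
  have hn : 1 < orderOf x := by
    have := Nat.totient_le (orderOf x)
    omega
  obtain ⟨b, hb⟩ := exists_pow_eq_self_of_coprime hcop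
  rcases hstar.eq_or_eq_inv_of_pow_eq rfl hb with hself | hinv
  · exact ha1 (pow_injOn_Iio_orderOf han hn (by simpa using hself))
  · refine ha2 (pow_injOn_Iio_orderOf han (Set.mem_Iio.2 (by omega)) ?_)
    show x ^ a = x ^ (orderOf x - 1)
    rw [hinv, pow_sub x hn.le, pow_orderOf_eq_one, pow_one, one_mul]

theorem property_star_restricts_torsion_general {G : Type*} [Group G]
    (𝒮 : Set (Set G))
    (hstar : PropertyStar 𝒮) :
    ∀ x : G, IsOfFinOrder x →
      (orderOf x).totient ≤ 2 ∧ orderOf x ∈ ({1, 2, 3, 4, 6} : Set ℕ) := by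
  intro x hx
  have htot := hstar.totient_orderOf_le_two x
  exact ⟨htot, Nat.mem_of_totient_le_two hx.orderOf_pos htot⟩

/-- If `G` admits a family of finite symmetric generating systems with
Property (★), then every torsion element of `G` has order 1, 2, 3, 4 or 6; equivalently
its order has Euler totient at most 2. -/
theorem property_star_restricts_torsion {G : Type*} [Group G] [Group.FG G]
    (𝒮 : Set (Set G))
    (h𝒮 : ∀ S ∈ 𝒮, S.Finite ∧ S⁻¹ = S ∧ Subgroup.closure S = ⊤)
    (hstar : PropertyStar 𝒮) :
    ∀ x : G, IsOfFinOrder x →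
      (orderOf x).totient ≤ 2 ∧ orderOf x ∈ ({1, 2, 3, 4, 6} : Set ℕ) :=
  property_star_restricts_torsion_general 𝒮 hstar
end

section
/- Let G and H be finitely generated groups, and 𝒮_H a family of finite symmetric generating systems of H with Property (★). Let φ: G → H be an 𝒮_H-semi-shared quasi-isometry with φ(e) = e. Then for all g, h ∈ G, φ(g·h) = φ(g)·φ(h) or φ(g·h) = φ(g)·φ(h)⁻¹ (the choice of sign may depend on g and h). -/
/-- `(η, η')` is an `𝒮_H`-semi-shared quasi-isometry: for some fixed `λ, ε ≥ 0`, every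
generating system `S_H ∈ 𝒮_H` is matched by some finite generating system `S_G` of `G`
making `(η, η')` a `(λ, ε)`-quasi-isometry. -/
def SemiSharedQI {G H : Type*} [Group G] [Group H] (𝒮H : Set (Set H))
    (η : G → H) (η' : H → G) : Prop :=
  ∃ lam eps : ℝ, 0 ≤ lam ∧ 0 ≤ eps ∧
    ∀ SH ∈ 𝒮H, ∃ SG : Set G, SG.Finite ∧ Subgroup.closure SG = ⊤ ∧
      IsQIPair (wdistR SG) (wdistR SH) η η' lam eps

/-- A family `𝒮` of generating systems of `G` is quasi-optimal if every `𝒮`-uniform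
quasi-isometry of `G` is left translation by a unique element of `G`. -/
def QuasiOptimal {G : Type*} [Group G] (𝒮 : Set (Set G)) : Prop :=
  ∀ φ : G → G, UniformQI 𝒮 φ → ∃! c : G, ∀ x : G, φ x = c * x

/-- Auxiliary: elements of `S` have word norm at most `1`. -/
lemma wnorm_le_one_of_mem {G : Type*} [Group G] {S : Set G} {g : G} (hg : g ∈ S) :
    wnorm S g ≤ 1 := by
  apply Nat.sInf_le
  exact ⟨[g], rfl, by simpa using Or.inl hg, by simp⟩

/-- Auxiliary arithmetic bound. -/
lemma key_bound {lam eps d b : ℝ} (hlam : 0 ≤ lam) (heps : 0 ≤ eps) (hd : 0 ≤ d)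
    (h1 : lam⁻¹ * d - eps ≤ 1) (h2 : b ≤ lam * d + eps) :
    b ≤ lam ^ 2 * (1 + eps) + eps := by
  rcases eq_or_lt_of_le hlam with rfl | hl
  · nlinarith
  · have h3 : lam * (lam⁻¹ * d) ≤ lam * (1 + eps) :=
      mul_le_mul_of_nonneg_left (by linarith) hl.le
    rw [← mul_assoc, mul_inv_cancel₀ hl.ne', one_mul] at h3
    nlinarith

/-- If `𝒮_H` is a family of finite symmetric generating systems of `H`
with Property (★) and `φ : G → H` is an `𝒮_H`-semi-shared quasi-isometry with
`φ(e) = e`, then `φ(g·h) = φ(g)·φ(h)^{±1}` for all `g, h ∈ G`. -/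
theorem semishared_qi_generalized_homomorphism {G H : Type*} [Group G] [Group H]
    [Group.FG G] [Group.FG H]
    (𝒮H : Set (Set H))
    (h𝒮H : ∀ S ∈ 𝒮H, S.Finite ∧ S⁻¹ = S ∧ Subgroup.closure S = ⊤)
    (hstar : PropertyStar 𝒮H)
    (φ : G → H) (φ' : H → G) (hφ : SemiSharedQI 𝒮H φ φ') (hφe : φ 1 = 1) :
    ∀ g h : G, φ (g * h) = φ g * φ h ∨ φ (g * h) = φ g * (φ h)⁻¹ := by
  obtain ⟨lam, eps, hlam, heps, hmain⟩ := hφ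
  intro g h
  by_contra hcon
  push_neg at hcon
  obtain ⟨h1, h2⟩ := hcon
  set u := (φ g)⁻¹ * φ (g * h) with hu
  set v := φ h with hv
  have hne1 : u ≠ v := by
    intro he
    apply h1
    rw [← he, hu, mul_inv_cancel_left]
  have hne2 : u ≠ v⁻¹ := by
    intro he
    apply h2
    rw [← he, hu, mul_inv_cancel_left]
  set x := lam ^ 2 * (1 + eps) + eps with hx
  have hx0 : (0:ℝ) ≤ x := by positivity
  set R := ⌈x⌉₊ + 1 with hR
  have hRx : x < (R : ℝ) := by
    calc x ≤ (⌈x⌉₊ : ℝ) := Nat.le_ceil x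
    _ < (R : ℝ) := by exact_mod_cast Nat.lt_succ_self _
  obtain ⟨S, hS, hcase⟩ := hstar u v hne1 hne2 R (Nat.succ_pos _)
  obtain ⟨SG, _, _, hq1, hq2, hq3, hq4⟩ := hmain S hS
  have hd1 : wdistR SG g (g * h) = wdistR SG 1 h := by
    unfold wdistR wdist
    congr 2
    group
  set d := wdistR SG 1 h with hdd
  have hd0 : (0:ℝ) ≤ d := Nat.cast_nonneg _
  have hU : wdistR S (φ g) (φ (g * h)) = (wnorm S u : ℝ) := by
    unfold wdistR wnorm wdist
    rw [hu, inv_one, one_mul]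
  have hV : wdistR S (φ 1) (φ h) = (wnorm S v : ℝ) := by
    unfold wdistR wnorm wdist
    rw [hφe]
  have hUlow : lam⁻¹ * d - eps ≤ (wnorm S u : ℝ) := by
    have := (hq1 g (g * h)).1
    rwa [hd1, hU] at this
  have hUup : (wnorm S u : ℝ) ≤ lam * d + eps := by
    have := (hq1 g (g * h)).2
    rwa [hd1, hU] at this
  have hVlow : lam⁻¹ * d - eps ≤ (wnorm S v : ℝ) := by
    have := (hq1 1 h).1
    rwa [hV] at this
  have hVup : (wnorm S v : ℝ) ≤ lam * d + eps := by
    have := (hq1 1 h).2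
    rwa [hV] at this
  rcases hcase with ⟨huS, hRv⟩ | ⟨hvS, hRu⟩
  · have hu1 : (wnorm S u : ℝ) ≤ 1 := by exact_mod_cast wnorm_le_one_of_mem huS
    have hRv' : (R : ℝ) ≤ (wnorm S v : ℝ) := by exact_mod_cast hRv
    have key : (wnorm S v : ℝ) ≤ x :=
      key_bound hlam heps hd0 (le_trans hUlow hu1) hVup
    linarith
  · have hv1 : (wnorm S v : ℝ) ≤ 1 := by exact_mod_cast wnorm_le_one_of_mem hvS
    have hRu' : (R : ℝ) ≤ (wnorm S u : ℝ) := by exact_mod_cast hRu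
    have key : (wnorm S u : ℝ) ≤ x :=
      key_bound hlam heps hd0 (le_trans hVlow hv1) hUup
    linarith
end
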